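/- If I is an essential two-sided ideal of R (i.e. I has nonzero intersection with every nonzero two-sided ideal of R), then (eIg, gIe) is an essential pair ideal of the associative pair (A⁺, A⁻) = (eRg, gRe): it is a pair ideal, and for every pair ideal (J⁺, J⁻) with J⁺ ≠ 0 or J⁻ ≠ 0 one has eIg ∩ J⁺ ≠ 0 or gIe ∩ J⁻ ≠ 0. -/
import Mathlib


/-- The Peirce space `eRg` (`g = 1 - e`), i.e. `A⁺` of the associative pair `(eRg, gRe)`. -/
def peirceP {R : Type*} [Ring R] (e : R) : Set R := {x | e * x * (1 - e) = x}

/-- The Peirce space `gRe` (`g = 1 - e`), i.e. `A⁻` of the associative pair `(eRg, gRe)`. -/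
def peirceM {R : Type*} [Ring R] (e : R) : Set R := {x | (1 - e) * x * e = x}

/-- A pair ideal `(I⁺, I⁻)` of the associative pair `(A⁺, A⁻) = (eRg, gRe)`, given by a pair
of subsets which are carriers of `Φ`-submodules of `R` contained in `eRg` resp. `gRe` and
satisfying the six pair-ideal product conditions. -/
def IsPairIdealSet (Φ : Type*) {R : Type*} [CommRing Φ] [Ring R] [Algebra Φ R]
    (e : R) (Ip Im : Set R) : Prop :=
  Ip ⊆ peirceP e ∧ Im ⊆ peirceM e ∧
  (0 : R) ∈ Ip ∧ (∀ x ∈ Ip, ∀ y ∈ Ip, x + y ∈ Ip) ∧ (∀ c : Φ, ∀ x ∈ Ip, c • x ∈ Ip) ∧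
  (0 : R) ∈ Im ∧ (∀ x ∈ Im, ∀ y ∈ Im, x + y ∈ Im) ∧ (∀ c : Φ, ∀ x ∈ Im, c • x ∈ Im) ∧
  (∀ x ∈ peirceP e, ∀ y ∈ peirceM e, ∀ z ∈ Ip, x * y * z ∈ Ip) ∧
  (∀ z ∈ Ip, ∀ y ∈ peirceM e, ∀ x ∈ peirceP e, z * y * x ∈ Ip) ∧
  (∀ x ∈ peirceP e, ∀ u ∈ Im, ∀ z ∈ peirceP e, x * u * z ∈ Ip) ∧
  (∀ x ∈ peirceM e, ∀ y ∈ peirceP e, ∀ u ∈ Im, x * y * u ∈ Im) ∧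
  (∀ u ∈ Im, ∀ y ∈ peirceP e, ∀ x ∈ peirceM e, u * y * x ∈ Im) ∧
  (∀ x ∈ peirceM e, ∀ z ∈ Ip, ∀ y ∈ peirceM e, x * z * y ∈ Im)

section PeirceAux
variable {R : Type*} [Ring R] {e : R}

lemma eg0 (he : e * e = e) : e * (1 - e) = 0 := by rw [mul_sub, mul_one, he, sub_self]
lemma ge0 (he : e * e = e) : (1 - e) * e = 0 := by rw [sub_mul, one_mul, he, sub_self]
lemma gidem (he : e * e = e) : (1 - e) * (1 - e) = 1 - e := by
  rw [mul_sub, mul_one, ge0 he, sub_zero]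

lemma kill1 {u v w : R} (h1 : u * v = 0) (h2 : v * w = w) : u * w = 0 := by
  rw [← h2, ← mul_assoc, h1, zero_mul]
lemma kill2 {u v w : R} (h1 : u * v = u) (h2 : v * w = 0) : u * w = 0 := by
  rw [← h1, mul_assoc, h2, mul_zero]

lemma pdec (r : R) : e*r*e + e*r*(1-e) + (1-e)*r*e + (1-e)*r*(1-e) = r := by noncomm_ring

lemma pPel (he : e * e = e) {p : R} (hp : p ∈ peirceP e) : e * p = p := by
  have hp' : e * p * (1 - e) = p := hp
  conv_lhs => rw [← hp']
  simp only [← mul_assoc]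
  rw [he]; exact hp'

lemma pPer (he : e * e = e) {p : R} (hp : p ∈ peirceP e) : p * (1 - e) = p := by
  have hp' : e * p * (1 - e) = p := hp
  conv_lhs => rw [← hp']
  rw [mul_assoc, gidem he]; exact hp'

lemma pPze (he : e * e = e) {p : R} (hp : p ∈ peirceP e) : p * e = 0 :=
  kill2 (pPer he hp) (ge0 he)
lemma pPzg (he : e * e = e) {p : R} (hp : p ∈ peirceP e) : (1 - e) * p = 0 :=
  kill1 (ge0 he) (pPel he hp)

lemma pMgl (he : e * e = e) {q : R} (hq : q ∈ peirceM e) : (1 - e) * q = q := by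
  have hq' : (1 - e) * q * e = q := hq
  conv_lhs => rw [← hq']
  simp only [← mul_assoc]
  rw [gidem he]; exact hq'

lemma pMre (he : e * e = e) {q : R} (hq : q ∈ peirceM e) : q * e = q := by
  have hq' : (1 - e) * q * e = q := hq
  conv_lhs => rw [← hq']
  rw [mul_assoc, he]; exact hq'

lemma pMzg (he : e * e = e) {q : R} (hq : q ∈ peirceM e) : q * (1 - e) = 0 :=
  kill2 (pMre he hq) (eg0 he)
lemma pMze (he : e * e = e) {q : R} (hq : q ∈ peirceM e) : e * q = 0 :=
  kill1 (eg0 he) (pMgl he hq)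

lemma mem_pP_of {x : R} (h1 : e * x = x) (h2 : x * (1 - e) = x) : x ∈ peirceP e :=
  show e * x * (1 - e) = x by rw [mul_assoc, h2, h1]
lemma mem_pM_of {x : R} (h1 : (1 - e) * x = x) (h2 : x * e = x) : x ∈ peirceM e :=
  show (1 - e) * x * e = x by rw [mul_assoc, h2, h1]

lemma ceL (he : e * e = e) {c : R} (hc : e * c * e = c) : e * c = c := by
  conv_lhs => rw [← hc]
  simp only [← mul_assoc]
  rw [he]; exact hc
lemma ceR (he : e * e = e) {c : R} (hc : e * c * e = c) : c * e = c := by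
  conv_lhs => rw [← hc]
  rw [mul_assoc, he]; exact hc
lemma ceZg (he : e * e = e) {c : R} (hc : e * c * e = c) : c * (1 - e) = 0 :=
  kill2 (ceR he hc) (eg0 he)
lemma ceZg' (he : e * e = e) {c : R} (hc : e * c * e = c) : (1 - e) * c = 0 :=
  kill1 (ge0 he) (ceL he hc)

lemma cgL (he : e * e = e) {c : R} (hc : (1-e) * c * (1-e) = c) : (1 - e) * c = c := by
  conv_lhs => rw [← hc]
  simp only [← mul_assoc]
  rw [gidem he]; exact hc
lemma cgR (he : e * e = e) {c : R} (hc : (1-e) * c * (1-e) = c) : c * (1 - e) = c := by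
  conv_lhs => rw [← hc]
  rw [mul_assoc, gidem he]; exact hc
lemma cgZe (he : e * e = e) {c : R} (hc : (1-e) * c * (1-e) = c) : c * e = 0 :=
  kill2 (cgR he hc) (ge0 he)
lemma cgZe' (he : e * e = e) {c : R} (hc : (1-e) * c * (1-e) = c) : e * c = 0 :=
  kill1 (eg0 he) (cgL he hc)

lemma prodPM (he : e * e = e) {p q : R} (hp : p ∈ peirceP e) (hq : q ∈ peirceM e) :
    e * (p * q) * e = p * q := by
  rw [← mul_assoc, pPel he hp, mul_assoc, pMre he hq]
lemma prodMP (he : e * e = e) {q p : R} (hq : q ∈ peirceM e) (hp : p ∈ peirceP e) :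
    (1 - e) * (q * p) * (1 - e) = q * p := by
  rw [← mul_assoc, pMgl he hq, mul_assoc, pPer he hp]

lemma mkP (he : e * e = e) (r : R) : e * r * (1 - e) ∈ peirceP e :=
  mem_pP_of (by simp only [← mul_assoc]; rw [he]) (by rw [mul_assoc, gidem he])
lemma mkM (he : e * e = e) (r : R) : (1 - e) * r * e ∈ peirceM e :=
  mem_pM_of (by simp only [← mul_assoc]; rw [gidem he]) (by rw [mul_assoc, he])
lemma mkE (he : e * e = e) (r : R) : e * (e * r * e) * e = e * r * e := by
  simp only [← mul_assoc]; rw [he, mul_assoc, he]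
lemma mkG (he : e * e = e) (r : R) :
    (1-e) * ((1-e) * r * (1-e)) * (1-e) = (1-e) * r * (1-e) := by
  simp only [← mul_assoc]; rw [gidem he, mul_assoc, gidem he]

lemma tripleP (he : e * e = e) {x z : R} (y : R) (hx : x ∈ peirceP e) (hz : z ∈ peirceP e) :
    x * y * z ∈ peirceP e :=
  mem_pP_of (by simp only [← mul_assoc]; rw [pPel he hx])
    (by rw [mul_assoc, pPer he hz])
lemma tripleM (he : e * e = e) {x z : R} (y : R) (hx : x ∈ peirceM e) (hz : z ∈ peirceM e) :
    x * y * z ∈ peirceM e :=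
  mem_pM_of (by simp only [← mul_assoc]; rw [pMgl he hx])
    (by rw [mul_assoc, pMre he hz])

end PeirceAux

def pPsub (Φ : Type*) {R : Type*} [CommRing Φ] [Ring R] [Algebra Φ R] (e : R) :
    Submodule Φ R where
  carrier := peirceP e
  zero_mem' := by show e * 0 * (1-e) = 0; rw [mul_zero, zero_mul]
  add_mem' := by
    rintro a b (ha : e*a*(1-e) = a) (hb : e*b*(1-e) = b)
    show e*(a+b)*(1-e) = a+b
    rw [mul_add, add_mul, ha, hb]
  smul_mem' := by
    intro c x hx
    have hx' : e*x*(1-e) = x := hx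
    show e*(c • x)*(1-e) = c • x
    rw [mul_smul_comm, smul_mul_assoc, hx']

def pMsub (Φ : Type*) {R : Type*} [CommRing Φ] [Ring R] [Algebra Φ R] (e : R) :
    Submodule Φ R where
  carrier := peirceM e
  zero_mem' := by show (1-e) * 0 * e = 0; rw [mul_zero, zero_mul]
  add_mem' := by
    rintro a b (ha : (1-e)*a*e = a) (hb : (1-e)*b*e = b)
    show (1-e)*(a+b)*e = a+b
    rw [mul_add, add_mul, ha, hb]
  smul_mem' := by
    intro c x hx
    have hx' : (1-e)*x*e = x := hx
    show (1-e)*(c • x)*e = c • x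
    rw [mul_smul_comm, smul_mul_assoc, hx']

theorem himgP {R : Type*} [Ring R] {e : R} (he : e * e = e) (I : TwoSidedIdeal R) :
    ((fun x => e * x * (1 - e)) '' (I : Set R)) = (I : Set R) ∩ peirceP e := by
  ext x
  constructor
  · rintro ⟨i, hi, rfl⟩
    exact ⟨I.mul_mem_right _ _ (I.mul_mem_left _ _ hi), mkP he i⟩
  · rintro ⟨h1, h2⟩
    exact ⟨x, h1, h2⟩

theorem himgM {R : Type*} [Ring R] {e : R} (he : e * e = e) (I : TwoSidedIdeal R) :
    ((fun x => (1 - e) * x * e) '' (I : Set R)) = (I : Set R) ∩ peirceM e := by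
  ext x
  constructor
  · rintro ⟨i, hi, rfl⟩
    exact ⟨I.mul_mem_right _ _ (I.mul_mem_left _ _ hi), mkM he i⟩
  · rintro ⟨h1, h2⟩
    exact ⟨x, h1, h2⟩

theorem aux_pairideal (Φ : Type*) {R : Type*} [CommRing Φ] [Ring R] [Algebra Φ R]
    (e : R) (he : e * e = e) (I : TwoSidedIdeal R) :
    IsPairIdealSet Φ e ((I : Set R) ∩ peirceP e) ((I : Set R) ∩ peirceM e) := by
  refine ⟨Set.inter_subset_right, Set.inter_subset_right,
    ⟨I.zero_mem, (pPsub Φ e).zero_mem⟩,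
    fun x hx y hy => ⟨I.add_mem hx.1 hy.1, (pPsub Φ e).add_mem hx.2 hy.2⟩,
    fun c x hx => ⟨?_, (pPsub Φ e).smul_mem c hx.2⟩,
    ⟨I.zero_mem, (pMsub Φ e).zero_mem⟩,
    fun x hx y hy => ⟨I.add_mem hx.1 hy.1, (pMsub Φ e).add_mem hx.2 hy.2⟩,
    fun c x hx => ⟨?_, (pMsub Φ e).smul_mem c hx.2⟩,
    fun x hx y hy z hz => ⟨I.mul_mem_left _ _ hz.1, tripleP he y hx hz.2⟩,
    fun z hz y hy x hx => ⟨I.mul_mem_right _ _ (I.mul_mem_right _ _ hz.1), tripleP he y hz.2 hx⟩,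
    fun x hx u hu z hz => ⟨I.mul_mem_right _ _ (I.mul_mem_left _ _ hu.1), tripleP he u hx hz⟩,
    fun x hx y hy u hu => ⟨I.mul_mem_left _ _ hu.1, tripleM he y hx hu.2⟩,
    fun u hu y hy x hx => ⟨I.mul_mem_right _ _ (I.mul_mem_right _ _ hu.1), tripleM he y hu.2 hx⟩,
    fun x hx z hz y hy => ⟨I.mul_mem_right _ _ (I.mul_mem_left _ _ hz.1), tripleM he z hx hy⟩⟩
  · rw [Algebra.smul_def]; exact I.mul_mem_left _ _ hx.1
  · rw [Algebra.smul_def]; exact I.mul_mem_left _ _ hx.1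

theorem aux_ess (Φ : Type*) {R : Type*} [CommRing Φ] [Ring R] [Algebra Φ R]
    (e : R) (he : e * e = e)
    (htight_e : {x : R | e * x * e = x} =
      ↑(Submodule.span Φ (insert e {z : R | ∃ p ∈ peirceP e, ∃ q ∈ peirceM e, z = p * q})))
    (htight_g : {x : R | (1 - e) * x * (1 - e) = x} =
      ↑(Submodule.span Φ
        (insert (1 - e) {z : R | ∃ p ∈ peirceM e, ∃ q ∈ peirceP e, z = p * q})))
    (hcorner_e : ∀ x : R, e * x * e = x →
      (∀ r ∈ peirceP e, x * r = 0) → (∀ r ∈ peirceM e, r * x = 0) → x = 0)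
    (hcorner_g : ∀ x : R, (1 - e) * x * (1 - e) = x →
      (∀ r ∈ peirceM e, x * r = 0) → (∀ r ∈ peirceP e, r * x = 0) → x = 0)
    (I : TwoSidedIdeal R)
    (hess : ∀ J : TwoSidedIdeal R, J ≠ ⊥ → ∃ x : R, x ∈ I ∧ x ∈ J ∧ x ≠ 0)
    (Jp Jm : Set R) (hJ : IsPairIdealSet Φ e Jp Jm)
    (hne : (∃ x ∈ Jp, x ≠ 0) ∨ (∃ x ∈ Jm, x ≠ 0)) :
    (∃ x ∈ ((I : Set R) ∩ peirceP e) ∩ Jp, x ≠ 0) ∨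
    (∃ x ∈ ((I : Set R) ∩ peirceM e) ∩ Jm, x ≠ 0) := by
  obtain ⟨hJpP, hJmM, h0p, haddp, hsmulp, h0m, haddm, hsmulm, c1, c2, c3, c4, c5, c6⟩ := hJ
  set Sp : Submodule Φ R :=
    { carrier := Jp
      zero_mem' := h0p
      add_mem' := fun {a b} ha hb => haddp a ha b hb
      smul_mem' := fun c {x} hx => hsmulp c x hx } with hSp
  set Sm : Submodule Φ R :=
    { carrier := Jm
      zero_mem' := h0m
      add_mem' := fun {a b} ha hb => haddm a ha b hb
      smul_mem' := fun c {x} hx => hsmulm c x hx } with hSm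
  set GE : Set R := {z | ∃ p ∈ Jp, ∃ q ∈ peirceM e, z = p * q} ∪
      {z | ∃ p ∈ peirceP e, ∃ q ∈ Jm, z = p * q} with hGE
  set GG : Set R := {z | ∃ m ∈ Jm, ∃ p ∈ peirceP e, z = m * p} ∪
      {z | ∃ m ∈ peirceM e, ∃ p ∈ Jp, z = m * p} with hGG
  set Kee : Submodule Φ R := Submodule.span Φ GE with hKee
  set Kgg : Submodule Φ R := Submodule.span Φ GG with hKgg
  have hSpJp : ∀ {a : R}, a ∈ Sp → a ∈ Jp := fun h => h
  have hSmJm : ∀ {a : R}, a ∈ Sm → a ∈ Jm := fun h => h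
  -- corner equations for Kee, Kgg
  have hKeeC : ∀ x ∈ Kee, e * x * e = x := by
    intro x hx
    rw [hKee] at hx
    induction hx using Submodule.span_induction with
    | mem z hz =>
      rw [hGE] at hz
      rcases hz with ⟨p, hp, q, hq, rfl⟩ | ⟨p, hp, q, hq, rfl⟩
      · exact prodPM he (hJpP hp) hq
      · exact prodPM he hp (hJmM hq)
    | zero => rw [mul_zero, zero_mul]
    | add a b _ _ iha ihb => rw [mul_add, add_mul, iha, ihb]
    | smul c a _ ih => rw [mul_smul_comm, smul_mul_assoc, ih]
  have hKggC : ∀ x ∈ Kgg, (1-e) * x * (1-e) = x := by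
    intro x hx
    rw [hKgg] at hx
    induction hx using Submodule.span_induction with
    | mem z hz =>
      rw [hGG] at hz
      rcases hz with ⟨m, hm, p, hp, rfl⟩ | ⟨m, hm, p, hp, rfl⟩
      · exact prodMP he (hJmM hm) hp
      · exact prodMP he hm (hJpP hp)
    | zero => rw [mul_zero, zero_mul]
    | add a b _ _ iha ihb => rw [mul_add, add_mul, iha, ihb]
    | smul c a _ ih => rw [mul_smul_comm, smul_mul_assoc, ih]
  -- multiplication of Kee, Kgg by Peirce spaces
  have M1 : ∀ q ∈ peirceM e, ∀ k ∈ Kee, q * k ∈ Jm := by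
    intro q hq k hk
    rw [hKee] at hk
    induction hk using Submodule.span_induction with
    | mem z hz =>
      rw [hGE] at hz
      rcases hz with ⟨p, hp, q', hq', rfl⟩ | ⟨p, hp, q', hq', rfl⟩
      · rw [← mul_assoc]; exact c6 q hq p hp q' hq'
      · rw [← mul_assoc]; exact c4 q hq p hp q' hq'
    | zero => rw [mul_zero]; exact h0m
    | add a b _ _ iha ihb => rw [mul_add]; exact haddm _ iha _ ihb
    | smul c a _ ih => rw [mul_smul_comm]; exact hsmulm c _ ih
  have M2 : ∀ p ∈ peirceP e, ∀ k ∈ Kgg, p * k ∈ Jp := by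
    intro p hp k hk
    rw [hKgg] at hk
    induction hk using Submodule.span_induction with
    | mem z hz =>
      rw [hGG] at hz
      rcases hz with ⟨m, hm, p', hp', rfl⟩ | ⟨m, hm, p', hp', rfl⟩
      · rw [← mul_assoc]; exact c3 p hp m hm p' hp'
      · rw [← mul_assoc]; exact c1 p hp m hm p' hp'
    | zero => rw [mul_zero]; exact h0p
    | add a b _ _ iha ihb => rw [mul_add]; exact haddp _ iha _ ihb
    | smul c a _ ih => rw [mul_smul_comm]; exact hsmulp c _ ih
  have M3 : ∀ k ∈ Kee, ∀ p ∈ peirceP e, k * p ∈ Jp := by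
    intro k hk p hp
    rw [hKee] at hk
    induction hk using Submodule.span_induction with
    | mem z hz =>
      rw [hGE] at hz
      rcases hz with ⟨p', hp', q, hq, rfl⟩ | ⟨p', hp', q, hq, rfl⟩
      · exact c2 p' hp' q hq p hp
      · exact c3 p' hp' q hq p hp
    | zero => rw [zero_mul]; exact h0p
    | add a b _ _ iha ihb => rw [add_mul]; exact haddp _ iha _ ihb
    | smul c a _ ih => rw [smul_mul_assoc]; exact hsmulp c _ ih
  have M4 : ∀ k ∈ Kgg, ∀ q ∈ peirceM e, k * q ∈ Jm := by
    intro k hk q hq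
    rw [hKgg] at hk
    induction hk using Submodule.span_induction with
    | mem z hz =>
      rw [hGG] at hz
      rcases hz with ⟨m, hm, p', hp', rfl⟩ | ⟨m, hm, p', hp', rfl⟩
      · exact c5 m hm p' hp' q hq
      · exact c6 m hm p' hp' q hq
    | zero => rw [zero_mul]; exact h0m
    | add a b _ _ iha ihb => rw [add_mul]; exact haddm _ iha _ ihb
    | smul c a _ ih => rw [smul_mul_assoc]; exact hsmulm c _ ih
  -- action of the diagonal corners
  have HE : ∀ c : R, e * c * e = c →
      (∀ p ∈ Jp, c * p ∈ Jp) ∧ (∀ m ∈ Jm, m * c ∈ Jm) ∧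
      (∀ k ∈ Kee, c * k ∈ Kee) ∧ (∀ k ∈ Kee, k * c ∈ Kee) := by
    intro c hc
    have hc' : c ∈ Submodule.span Φ
        (insert e {z : R | ∃ p ∈ peirceP e, ∃ q ∈ peirceM e, z = p * q}) := by
      have hmem : c ∈ {x : R | e * x * e = x} := hc
      rw [htight_e] at hmem
      exact hmem
    clear hc
    induction hc' using Submodule.span_induction with
    | mem z hz =>
      rcases hz with rfl | ⟨p, hp, q, hq, rfl⟩
      · exact ⟨fun p hp => by rw [pPel he (hJpP hp)]; exact hp,
          fun m hm => by rw [pMre he (hJmM hm)]; exact hm,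
          fun k hk => by rw [ceL he (hKeeC k hk)]; exact hk,
          fun k hk => by rw [ceR he (hKeeC k hk)]; exact hk⟩
      · refine ⟨fun p' hp' => c1 p hp q hq p' hp',
          fun m hm => by rw [← mul_assoc]; exact c5 m hm p hp q hq,
          fun k hk => ?_, fun k hk => ?_⟩
        · rw [mul_assoc]
          exact Submodule.subset_span (Or.inr ⟨p, hp, q * k, M1 q hq k hk, rfl⟩)
        · rw [← mul_assoc]
          exact Submodule.subset_span (Or.inl ⟨k * p, M3 k hk p hp, q, hq, rfl⟩)
    | zero =>
      exact ⟨fun p hp => by rw [zero_mul]; exact h0p,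
        fun m hm => by rw [mul_zero]; exact h0m,
        fun k hk => by rw [zero_mul]; exact Kee.zero_mem,
        fun k hk => by rw [mul_zero]; exact Kee.zero_mem⟩
    | add a b _ _ iha ihb =>
      exact ⟨fun p hp => by rw [add_mul]; exact haddp _ (iha.1 p hp) _ (ihb.1 p hp),
        fun m hm => by rw [mul_add]; exact haddm _ (iha.2.1 m hm) _ (ihb.2.1 m hm),
        fun k hk => by rw [add_mul]; exact Kee.add_mem (iha.2.2.1 k hk) (ihb.2.2.1 k hk),
        fun k hk => by rw [mul_add]; exact Kee.add_mem (iha.2.2.2 k hk) (ihb.2.2.2 k hk)⟩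
    | smul a x _ ih =>
      exact ⟨fun p hp => by rw [smul_mul_assoc]; exact hsmulp a _ (ih.1 p hp),
        fun m hm => by rw [mul_smul_comm]; exact hsmulm a _ (ih.2.1 m hm),
        fun k hk => by rw [smul_mul_assoc]; exact Kee.smul_mem a (ih.2.2.1 k hk),
        fun k hk => by rw [mul_smul_comm]; exact Kee.smul_mem a (ih.2.2.2 k hk)⟩
  have HG : ∀ c : R, (1-e) * c * (1-e) = c →
      (∀ m ∈ Jm, c * m ∈ Jm) ∧ (∀ p ∈ Jp, p * c ∈ Jp) ∧
      (∀ d ∈ Kgg, c * d ∈ Kgg) ∧ (∀ d ∈ Kgg, d * c ∈ Kgg) := by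
    intro c hc
    have hc' : c ∈ Submodule.span Φ
        (insert (1-e) {z : R | ∃ p ∈ peirceM e, ∃ q ∈ peirceP e, z = p * q}) := by
      have hmem : c ∈ {x : R | (1-e) * x * (1-e) = x} := hc
      rw [htight_g] at hmem
      exact hmem
    clear hc
    induction hc' using Submodule.span_induction with
    | mem z hz =>
      rcases hz with rfl | ⟨m0, hm0, p0, hp0, rfl⟩
      · exact ⟨fun m hm => by rw [pMgl he (hJmM hm)]; exact hm,
          fun p hp => by rw [pPer he (hJpP hp)]; exact hp,
          fun d hd => by rw [cgL he (hKggC d hd)]; exact hd,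
          fun d hd => by rw [cgR he (hKggC d hd)]; exact hd⟩
      · refine ⟨fun m hm => c4 m0 hm0 p0 hp0 m hm,
          fun p hp => by rw [← mul_assoc]; exact c2 p hp m0 hm0 p0 hp0,
          fun d hd => ?_, fun d hd => ?_⟩
        · rw [mul_assoc]
          exact Submodule.subset_span (Or.inr ⟨m0, hm0, p0 * d, M2 p0 hp0 d hd, rfl⟩)
        · rw [← mul_assoc]
          exact Submodule.subset_span (Or.inl ⟨d * m0, M4 d hd m0 hm0, p0, hp0, rfl⟩)
    | zero =>
      exact ⟨fun m hm => by rw [zero_mul]; exact h0m,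
        fun p hp => by rw [mul_zero]; exact h0p,
        fun d hd => by rw [zero_mul]; exact Kgg.zero_mem,
        fun d hd => by rw [mul_zero]; exact Kgg.zero_mem⟩
    | add a b _ _ iha ihb =>
      exact ⟨fun m hm => by rw [add_mul]; exact haddm _ (iha.1 m hm) _ (ihb.1 m hm),
        fun p hp => by rw [mul_add]; exact haddp _ (iha.2.1 p hp) _ (ihb.2.1 p hp),
        fun d hd => by rw [add_mul]; exact Kgg.add_mem (iha.2.2.1 d hd) (ihb.2.2.1 d hd),
        fun d hd => by rw [mul_add]; exact Kgg.add_mem (iha.2.2.2 d hd) (ihb.2.2.2 d hd)⟩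
    | smul a x _ ih =>
      exact ⟨fun m hm => by rw [smul_mul_assoc]; exact hsmulm a _ (ih.1 m hm),
        fun p hp => by rw [mul_smul_comm]; exact hsmulp a _ (ih.2.1 p hp),
        fun d hd => by rw [smul_mul_assoc]; exact Kgg.smul_mem a (ih.2.2.1 d hd),
        fun d hd => by rw [mul_smul_comm]; exact Kgg.smul_mem a (ih.2.2.2 d hd)⟩
  -- the ideal generated
  set Jmod : Submodule Φ R := Sp ⊔ Sm ⊔ Kee ⊔ Kgg with hJmod
  have hSpJ : ∀ x ∈ Jp, x ∈ Jmod := fun x hx =>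
    Submodule.mem_sup_left (Submodule.mem_sup_left (Submodule.mem_sup_left hx))
  have hSmJ : ∀ x ∈ Jm, x ∈ Jmod := fun x hx =>
    Submodule.mem_sup_left (Submodule.mem_sup_left (Submodule.mem_sup_right hx))
  have hKeeJ : ∀ x ∈ Kee, x ∈ Jmod := fun x hx =>
    Submodule.mem_sup_left (Submodule.mem_sup_right hx)
  have hKggJ : ∀ x ∈ Kgg, x ∈ Jmod := fun x hx => Submodule.mem_sup_right hx
  have hsplitL : ∀ r a : R, r * a =
      (e*r*e)*a + (e*r*(1-e))*a + ((1-e)*r*e)*a + ((1-e)*r*(1-e))*a := by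
    intro r a
    conv_lhs => rw [← pdec (e := e) r]
    rw [add_mul, add_mul, add_mul]
  have hsplitR : ∀ r a : R, a * r =
      a*(e*r*e) + a*(e*r*(1-e)) + a*((1-e)*r*e) + a*((1-e)*r*(1-e)) := by
    intro r a
    conv_lhs => rw [← pdec (e := e) r]
    rw [mul_add, mul_add, mul_add]
  -- left multiplication closure
  have L1 : ∀ r : R, ∀ a ∈ Jp, r * a ∈ Jmod := by
    intro r a ha
    rw [hsplitL r a]
    refine Jmod.add_mem (Jmod.add_mem (Jmod.add_mem ?_ ?_) ?_) ?_
    · exact hSpJ _ ((HE _ (mkE he r)).1 a ha)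
    · rw [kill1 (pPze he (mkP he r)) (pPel he (hJpP ha))]; exact Jmod.zero_mem
    · exact hKggJ _ (Submodule.subset_span (Or.inr ⟨_, mkM he r, a, ha, rfl⟩))
    · rw [kill1 (cgZe he (mkG he r)) (pPel he (hJpP ha))]; exact Jmod.zero_mem
  have L2 : ∀ r : R, ∀ b ∈ Jm, r * b ∈ Jmod := by
    intro r b hb
    rw [hsplitL r b]
    refine Jmod.add_mem (Jmod.add_mem (Jmod.add_mem ?_ ?_) ?_) ?_
    · rw [kill1 (ceZg he (mkE he r)) (pMgl he (hJmM hb))]; exact Jmod.zero_mem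
    · exact hKeeJ _ (Submodule.subset_span (Or.inr ⟨_, mkP he r, b, hb, rfl⟩))
    · rw [kill2 (pMre he (mkM he r)) (pMze he (hJmM hb))]; exact Jmod.zero_mem
    · exact hSmJ _ ((HG _ (mkG he r)).1 b hb)
  have L3 : ∀ r : R, ∀ k ∈ Kee, r * k ∈ Jmod := by
    intro r k hk
    rw [hsplitL r k]
    refine Jmod.add_mem (Jmod.add_mem (Jmod.add_mem ?_ ?_) ?_) ?_
    · exact hKeeJ _ ((HE _ (mkE he r)).2.2.1 k hk)
    · rw [kill1 (pPze he (mkP he r)) (ceL he (hKeeC k hk))]; exact Jmod.zero_mem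
    · exact hSmJ _ (M1 _ (mkM he r) k hk)
    · rw [kill1 (cgZe he (mkG he r)) (ceL he (hKeeC k hk))]; exact Jmod.zero_mem
  have L4 : ∀ r : R, ∀ d ∈ Kgg, r * d ∈ Jmod := by
    intro r d hd
    rw [hsplitL r d]
    refine Jmod.add_mem (Jmod.add_mem (Jmod.add_mem ?_ ?_) ?_) ?_
    · rw [kill1 (ceZg he (mkE he r)) (cgL he (hKggC d hd))]; exact Jmod.zero_mem
    · exact hSpJ _ (M2 _ (mkP he r) d hd)
    · rw [kill2 (pMre he (mkM he r)) (cgZe' he (hKggC d hd))]; exact Jmod.zero_mem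
    · exact hKggJ _ ((HG _ (mkG he r)).2.2.1 d hd)
  have L : ∀ (r x : R), x ∈ Jmod → r * x ∈ Jmod := by
    intro r x hx
    rw [hJmod] at hx
    rcases Submodule.mem_sup.1 hx with ⟨y, hy, d, hd, rfl⟩
    rcases Submodule.mem_sup.1 hy with ⟨z, hz, k, hk, rfl⟩
    rcases Submodule.mem_sup.1 hz with ⟨a, ha, b, hb, rfl⟩
    rw [mul_add, mul_add, mul_add]
    exact Jmod.add_mem (Jmod.add_mem (Jmod.add_mem (L1 r a (hSpJp ha)) (L2 r b (hSmJm hb)))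
      (L3 r k hk)) (L4 r d hd)
  -- right multiplication closure
  have R1 : ∀ r : R, ∀ a ∈ Jp, a * r ∈ Jmod := by
    intro r a ha
    rw [hsplitR r a]
    refine Jmod.add_mem (Jmod.add_mem (Jmod.add_mem ?_ ?_) ?_) ?_
    · rw [kill1 (pPze he (hJpP ha)) (ceL he (mkE he r))]; exact Jmod.zero_mem
    · rw [kill1 (pPze he (hJpP ha)) (pPel he (mkP he r))]; exact Jmod.zero_mem
    · exact hKeeJ _ (Submodule.subset_span (Or.inl ⟨a, ha, _, mkM he r, rfl⟩))
    · exact hSpJ _ ((HG _ (mkG he r)).2.1 a ha)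
  have R2 : ∀ r : R, ∀ b ∈ Jm, b * r ∈ Jmod := by
    intro r b hb
    rw [hsplitR r b]
    refine Jmod.add_mem (Jmod.add_mem (Jmod.add_mem ?_ ?_) ?_) ?_
    · exact hSmJ _ ((HE _ (mkE he r)).2.1 b hb)
    · exact hKggJ _ (Submodule.subset_span (Or.inl ⟨b, hb, _, mkP he r, rfl⟩))
    · rw [kill1 (pMzg he (hJmM hb)) (pMgl he (mkM he r))]; exact Jmod.zero_mem
    · rw [kill1 (pMzg he (hJmM hb)) (cgL he (mkG he r))]; exact Jmod.zero_mem
  have R3 : ∀ r : R, ∀ k ∈ Kee, k * r ∈ Jmod := by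
    intro r k hk
    rw [hsplitR r k]
    refine Jmod.add_mem (Jmod.add_mem (Jmod.add_mem ?_ ?_) ?_) ?_
    · exact hKeeJ _ ((HE _ (mkE he r)).2.2.2 k hk)
    · exact hSpJ _ (M3 k hk _ (mkP he r))
    · rw [kill2 (ceR he (hKeeC k hk)) (pMze he (mkM he r))]; exact Jmod.zero_mem
    · rw [kill2 (ceR he (hKeeC k hk)) (cgZe' he (mkG he r))]; exact Jmod.zero_mem
  have R4 : ∀ r : R, ∀ d ∈ Kgg, d * r ∈ Jmod := by
    intro r d hd
    rw [hsplitR r d]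
    refine Jmod.add_mem (Jmod.add_mem (Jmod.add_mem ?_ ?_) ?_) ?_
    · rw [kill2 (cgR he (hKggC d hd)) (ceZg' he (mkE he r))]; exact Jmod.zero_mem
    · rw [kill2 (cgR he (hKggC d hd)) (pPzg he (mkP he r))]; exact Jmod.zero_mem
    · exact hSmJ _ (M4 d hd _ (mkM he r))
    · exact hKggJ _ ((HG _ (mkG he r)).2.2.2 d hd)
  have Rm : ∀ (r x : R), x ∈ Jmod → x * r ∈ Jmod := by
    intro r x hx
    rw [hJmod] at hx
    rcases Submodule.mem_sup.1 hx with ⟨y, hy, d, hd, rfl⟩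
    rcases Submodule.mem_sup.1 hy with ⟨z, hz, k, hk, rfl⟩
    rcases Submodule.mem_sup.1 hz with ⟨a, ha, b, hb, rfl⟩
    rw [add_mul, add_mul, add_mul]
    exact Jmod.add_mem (Jmod.add_mem (Jmod.add_mem (R1 r a (hSpJp ha)) (R2 r b (hSmJm hb)))
      (R3 r k hk)) (R4 r d hd)
  -- the two-sided ideal
  let J : TwoSidedIdeal R := TwoSidedIdeal.mk' (Jmod : Set R) Jmod.zero_mem
    (fun ha hb => Jmod.add_mem ha hb) (fun ha => Jmod.neg_mem ha)
    (fun {x y} hy => L x y hy) (fun {x y} hx => Rm y x hx)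
  have hmemJ : ∀ x : R, x ∈ J ↔ x ∈ Jmod := fun x =>
    TwoSidedIdeal.mem_mk' _ _ _ _ _ _ x
  have hJne : J ≠ ⊥ := by
    intro hbot
    rcases hne with ⟨w, hw, hw0⟩ | ⟨w, hw, hw0⟩
    · have hwJ : w ∈ J := (hmemJ w).2 (hSpJ w hw)
      rw [hbot] at hwJ
      exact hw0 ((TwoSidedIdeal.mem_bot R).1 hwJ)
    · have hwJ : w ∈ J := (hmemJ w).2 (hSmJ w hw)
      rw [hbot] at hwJ
      exact hw0 ((TwoSidedIdeal.mem_bot R).1 hwJ)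
  obtain ⟨x, hxI, hxJ, hx0⟩ := hess J hJne
  replace hxJ := (hmemJ x).1 hxJ
  rw [hJmod] at hxJ
  rcases Submodule.mem_sup.1 hxJ with ⟨y, hy, d, hd, rfl⟩
  rcases Submodule.mem_sup.1 hy with ⟨z, hz, k, hk, rfl⟩
  rcases Submodule.mem_sup.1 hz with ⟨a, ha, b, hb, rfl⟩
  replace ha := hSpJp ha
  replace hb := hSmJm hb
  -- the four Peirce projections of x = a + b + k + d
  have h1 : e*(a+b+k+d)*(1-e) = a := by
    have e1 : e*a*(1-e) = a := hJpP ha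
    have e2 : e*b*(1-e) = 0 := by rw [pMze he (hJmM hb), zero_mul]
    have e3 : e*k*(1-e) = 0 := by rw [ceL he (hKeeC k hk), ceZg he (hKeeC k hk)]
    have e4 : e*d*(1-e) = 0 := by rw [cgZe' he (hKggC d hd), zero_mul]
    rw [mul_add, mul_add, mul_add, add_mul, add_mul, add_mul, e1, e2, e3, e4,
      add_zero, add_zero, add_zero]
  have h2 : (1-e)*(a+b+k+d)*e = b := by
    have e1 : (1-e)*a*e = 0 := by rw [pPzg he (hJpP ha), zero_mul]
    have e2 : (1-e)*b*e = b := hJmM hb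
    have e3 : (1-e)*k*e = 0 := by rw [ceZg' he (hKeeC k hk), zero_mul]
    have e4 : (1-e)*d*e = 0 := by rw [cgL he (hKggC d hd), cgZe he (hKggC d hd)]
    rw [mul_add, mul_add, mul_add, add_mul, add_mul, add_mul, e1, e2, e3, e4,
      zero_add, add_zero, add_zero]
  have h3 : e*(a+b+k+d)*e = k := by
    have e1 : e*a*e = 0 := by rw [pPel he (hJpP ha), pPze he (hJpP ha)]
    have e2 : e*b*e = 0 := by rw [pMze he (hJmM hb), zero_mul]
    have e3 : e*k*e = k := hKeeC k hk
    have e4 : e*d*e = 0 := by rw [cgZe' he (hKggC d hd), zero_mul]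
    rw [mul_add, mul_add, mul_add, add_mul, add_mul, add_mul, e1, e2, e3, e4,
      zero_add, zero_add, add_zero]
  have h4 : (1-e)*(a+b+k+d)*(1-e) = d := by
    have e1 : (1-e)*a*(1-e) = 0 := by rw [pPzg he (hJpP ha), zero_mul]
    have e2 : (1-e)*b*(1-e) = 0 := by rw [pMgl he (hJmM hb), pMzg he (hJmM hb)]
    have e3 : (1-e)*k*(1-e) = 0 := by rw [ceZg' he (hKeeC k hk), zero_mul]
    have e4 : (1-e)*d*(1-e) = d := hKggC d hd
    rw [mul_add, mul_add, mul_add, add_mul, add_mul, add_mul, e1, e2, e3, e4,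
      zero_add, zero_add, zero_add]
  have haI : a ∈ I := h1 ▸ I.mul_mem_right _ _ (I.mul_mem_left _ _ hxI)
  have hbI : b ∈ I := h2 ▸ I.mul_mem_right _ _ (I.mul_mem_left _ _ hxI)
  have hkI : k ∈ I := h3 ▸ I.mul_mem_right _ _ (I.mul_mem_left _ _ hxI)
  have hdI : d ∈ I := h4 ▸ I.mul_mem_right _ _ (I.mul_mem_left _ _ hxI)
  rcases eq_or_ne a 0 with ha0 | ha0
  · rcases eq_or_ne b 0 with hb0 | hb0
    · have hkd : k + d ≠ 0 := by
        intro hkd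
        apply hx0
        rw [ha0, hb0, zero_add, zero_add, hkd]
      rcases eq_or_ne k 0 with hk0 | hk0
      · -- d ≠ 0, use corner g
        have hd0 : d ≠ 0 := by
          intro h; exact hkd (by rw [hk0, h, add_zero])
        have hdC : (1-e)*d*(1-e) = d := hKggC d hd
        by_cases hall : ∀ m ∈ peirceM e, d * m = 0
        · have hex : ¬ ∀ p ∈ peirceP e, p * d = 0 :=
            fun h => hd0 (hcorner_g d hdC hall h)
          push_neg at hex
          obtain ⟨p, hp, hpd⟩ := hex
          left
          refine ⟨p * d, ⟨⟨I.mul_mem_left _ _ hdI, ?_⟩, M2 p hp d hd⟩, hpd⟩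
          exact mem_pP_of (by rw [← mul_assoc, pPel he hp]) (by rw [mul_assoc, cgR he hdC])
        · push_neg at hall
          obtain ⟨m, hm, hdm⟩ := hall
          right
          refine ⟨d * m, ⟨⟨I.mul_mem_right _ _ hdI, ?_⟩, M4 d hd m hm⟩, hdm⟩
          exact mem_pM_of (by rw [← mul_assoc, cgL he hdC]) (by rw [mul_assoc, pMre he hm])
      · -- k ≠ 0, use corner e
        have hkC : e*k*e = k := hKeeC k hk
        by_cases hall : ∀ p ∈ peirceP e, k * p = 0
        · have hex : ¬ ∀ m ∈ peirceM e, m * k = 0 :=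
            fun h => hk0 (hcorner_e k hkC hall h)
          push_neg at hex
          obtain ⟨m, hm, hmk⟩ := hex
          right
          refine ⟨m * k, ⟨⟨I.mul_mem_left _ _ hkI, ?_⟩, M1 m hm k hk⟩, hmk⟩
          exact mem_pM_of (by rw [← mul_assoc, pMgl he hm]) (by rw [mul_assoc, ceR he hkC])
        · push_neg at hall
          obtain ⟨p, hp, hkp⟩ := hall
          left
          refine ⟨k * p, ⟨⟨I.mul_mem_right _ _ hkI, ?_⟩, M3 k hk p hp⟩, hkp⟩
          exact mem_pP_of (by rw [← mul_assoc, ceL he hkC]) (by rw [mul_assoc, pPer he hp])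
    · right
      exact ⟨b, ⟨⟨hbI, hJmM hb⟩, hb⟩, hb0⟩
  · left
    exact ⟨a, ⟨⟨haI, hJpP ha⟩, ha⟩, ha0⟩

/-- Let `Φ` be a commutative unital ring and `R` a unital `Φ`-algebra tightly
generated by the associative pair `(A⁺, A⁻) = (eRg, gRe)` and satisfying the
corner-faithfulness conditions (the setting of the standard imbedding).  If `I` is an
essential two-sided ideal of `R`, then `(eIg, gIe)` is an essential pair ideal of
`(A⁺, A⁻)`: it is a pair ideal, and it meets every nonzero pair ideal nontrivially. -/
theorem stmt_5 (Φ : Type*) {R : Type*} [CommRing Φ] [Ring R] [Algebra Φ R]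
    (e : R) (he : e * e = e)
    (htight_e : {x : R | e * x * e = x} =
      ↑(Submodule.span Φ (insert e {z : R | ∃ p ∈ peirceP e, ∃ q ∈ peirceM e, z = p * q})))
    (htight_g : {x : R | (1 - e) * x * (1 - e) = x} =
      ↑(Submodule.span Φ
        (insert (1 - e) {z : R | ∃ p ∈ peirceM e, ∃ q ∈ peirceP e, z = p * q})))
    (hcorner_e : ∀ x : R, e * x * e = x →
      (∀ r ∈ peirceP e, x * r = 0) → (∀ r ∈ peirceM e, r * x = 0) → x = 0)
    (hcorner_g : ∀ x : R, (1 - e) * x * (1 - e) = x →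
      (∀ r ∈ peirceM e, x * r = 0) → (∀ r ∈ peirceP e, r * x = 0) → x = 0)
    (I : TwoSidedIdeal R)
    (hess : ∀ J : TwoSidedIdeal R, J ≠ ⊥ → ∃ x : R, x ∈ I ∧ x ∈ J ∧ x ≠ 0) :
    IsPairIdealSet Φ e ((fun x => e * x * (1 - e)) '' (I : Set R))
      ((fun x => (1 - e) * x * e) '' (I : Set R)) ∧
    ∀ Jp Jm : Set R, IsPairIdealSet Φ e Jp Jm →
      ((∃ x ∈ Jp, x ≠ 0) ∨ (∃ x ∈ Jm, x ≠ 0)) →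
      ((∃ x ∈ ((fun x => e * x * (1 - e)) '' (I : Set R)) ∩ Jp, x ≠ 0) ∨
       (∃ x ∈ ((fun x => (1 - e) * x * e) '' (I : Set R)) ∩ Jm, x ≠ 0)) := by
  rw [himgP he I, himgM he I]
  exact ⟨aux_pairideal Φ e he I,
    fun Jp Jm hJ hne => aux_ess Φ e he htight_e htight_g hcorner_e hcorner_g I hess Jp Jm hJ hne⟩
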